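/- arXiv:2206.06872 — 5 statements merged into one kernel-verified Lean document; each statement's English description precedes it below -/
import Mathlib

section
/- Fix σ > 0, M ≥ 1, ν ∈ [0,1], and probability simplex weights ω₁, …, ω_M (ω_i ≥ 0, Σ_i ω_i = 1). For each i = 1, …, M let N_i ≥ 1, let K_i be an N_i×N_i real positive semidefinite matrix, let k_i ∈ ℝ^{N_i} be a vector with every entry of absolute value at most 1, and let ȳ_i, ỹ_i, f̄_i, f̃_i ∈ ℝ^{N_i} be vectors satisfying ‖ȳ_i − f̄_i‖₂ ≤ √N_i · a_i, ‖ỹ_i − f̃_i‖₂ ≤ √N_i · a_i for some a_i ≥ 0, and |f̄_{i,j} − f̃_{i,j}| ≤ d_i for all j and some d_i ≥ 0. Then ν·|Σ_{i=1}^M ω_i · k_iᵀ(K_i + σ²·I)⁻¹(ȳ_i − ỹ_i)| ≤ ν·Σ_{i=1}^M ω_i · (N_i/σ²)·(2a_i + d_i). -/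
/-!
For `K ⪰ 0` and `c > 0`, `c ‖u‖² ≤ uᵀ (K + c • 1) u ≤ ‖u‖ ‖(K + c • 1) u‖`, so the resolvent
`(K + c • 1)⁻¹` has Euclidean operator norm at most `1 / c`. By Cauchy–Schwarz and `‖k_i‖ ≤ √N_i`,
the `i`-th term is then at most `√N_i ‖ȳ_i − ỹ_i‖ / σ²`, and the triangle inequality through
`f̄_i` and `f̃_i` gives `‖ȳ_i − ỹ_i‖ ≤ √N_i (2 a_i + d_i)`. The weighted sum is bounded termwise.
-/

open Matrix WithLp

section
variable {n : Type*} [Fintype n]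

theorem sqrt_sum_sq_eq_norm_toLp (v : n → ℝ) : √(∑ j, v j ^ 2) = ‖toLp 2 v‖ := by
  simp [EuclideanSpace.norm_eq]

theorem abs_dotProduct_le_norm_mul_norm (u v : n → ℝ) :
    |u ⬝ᵥ v| ≤ ‖toLp 2 u‖ * ‖toLp 2 v‖ := by
  simpa [EuclideanSpace.inner_toLp_toLp, dotProduct_comm] using
    abs_real_inner_le_norm (toLp 2 u) (toLp 2 v)

theorem norm_toLp_le_sqrt_card_mul {v : n → ℝ} {d : ℝ} (hd : 0 ≤ d) (hv : ∀ j, |v j| ≤ d) :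
    ‖toLp 2 v‖ ≤ √(Fintype.card n) * d := by
  rw [← sqrt_sum_sq_eq_norm_toLp, ← Real.sqrt_sq hd, ← Real.sqrt_mul (Nat.cast_nonneg _)]
  gcongr
  calc ∑ j, v j ^ 2 ≤ ∑ _j : n, d ^ 2 := by
        refine Finset.sum_le_sum fun j _ => ?_
        simpa only [sq_abs] using pow_le_pow_left₀ (abs_nonneg (v j)) (hv j) 2
    _ = _ := by simp

variable [DecidableEq n]

theorem Matrix.PosSemidef.smul_norm_le_norm_add_smul_one_mulVec {K : Matrix n n ℝ}
    (hK : K.PosSemidef) (c : ℝ) (u : n → ℝ) :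
    c * ‖toLp 2 u‖ ≤ ‖toLp 2 ((K + c • 1) *ᵥ u)‖ := by
  have hquad : c * ‖toLp 2 u‖ ^ 2 ≤ u ⬝ᵥ ((K + c • 1) *ᵥ u) := by
    have hKu : 0 ≤ u ⬝ᵥ (K *ᵥ u) := by simpa using hK.dotProduct_mulVec_nonneg u
    have hnorm : ‖toLp 2 u‖ ^ 2 = u ⬝ᵥ u := by
      rw [EuclideanSpace.real_norm_sq_eq]
      simp [dotProduct, sq]
    rw [add_mulVec, smul_mulVec, one_mulVec, dotProduct_add, dotProduct_smul, hnorm, smul_eq_mul]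
    linarith
  rcases (norm_nonneg (toLp 2 u)).eq_or_lt with hu | hu
  · rw [← hu, mul_zero]
    exact norm_nonneg _
  · refine le_of_mul_le_mul_right ?_ hu
    calc c * ‖toLp 2 u‖ * ‖toLp 2 u‖ = c * ‖toLp 2 u‖ ^ 2 := by ring
      _ ≤ u ⬝ᵥ ((K + c • 1) *ᵥ u) := hquad
      _ ≤ ‖toLp 2 ((K + c • 1) *ᵥ u)‖ * ‖toLp 2 u‖ := by
        rw [mul_comm]
        exact (le_abs_self _).trans (abs_dotProduct_le_norm_mul_norm _ _)

theorem Matrix.PosSemidef.norm_inv_add_smul_one_mulVec_le {K : Matrix n n ℝ}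
    (hK : K.PosSemidef) {c : ℝ} (hc : 0 < c) (v : n → ℝ) :
    ‖toLp 2 ((K + c • 1)⁻¹ *ᵥ v)‖ ≤ ‖toLp 2 v‖ / c := by
  have hunit : IsUnit (K + c • 1).det :=
    (isUnit_iff_isUnit_det _).mp (PosDef.posSemidef_add hK (PosDef.one.smul hc)).isUnit
  rw [le_div_iff₀' hc]
  have := hK.smul_norm_le_norm_add_smul_one_mulVec c ((K + c • 1)⁻¹ *ᵥ v)
  rwa [mulVec_mulVec, mul_nonsing_inv _ hunit, one_mulVec] at this

theorem Matrix.PosSemidef.abs_dotProduct_inv_add_smul_one_mulVec_le {K : Matrix n n ℝ}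
    (hK : K.PosSemidef) {c : ℝ} (hc : 0 < c) {k : n → ℝ} (hk : ∀ j, |k j| ≤ 1) {v : n → ℝ}
    {b : ℝ} (hv : ‖toLp 2 v‖ ≤ √(Fintype.card n) * b) :
    |k ⬝ᵥ ((K + c • 1)⁻¹ *ᵥ v)| ≤ Fintype.card n / c * b := by
  have hsqrt : √(Fintype.card n : ℝ) * √(Fintype.card n) = Fintype.card n :=
    Real.mul_self_sqrt (Nat.cast_nonneg _)
  calc |k ⬝ᵥ ((K + c • 1)⁻¹ *ᵥ v)|
      ≤ ‖toLp 2 k‖ * ‖toLp 2 ((K + c • 1)⁻¹ *ᵥ v)‖ := abs_dotProduct_le_norm_mul_norm _ _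
    _ ≤ (√(Fintype.card n) * 1) * (√(Fintype.card n) * b / c) := by
        gcongr
        · exact norm_toLp_le_sqrt_card_mul zero_le_one hk
        · exact (hK.norm_inv_add_smul_one_mulVec_le hc v).trans (by gcongr)
    _ = Fintype.card n / c * b := by rw [mul_one, ← mul_div_assoc, ← mul_assoc, hsqrt]; ring

end

theorem norm_toLp_sub_le_of_approx {n : Type*} [Fintype n] {y y' f f' : n → ℝ} {a d : ℝ}
    (hd : 0 ≤ d) (hy : ‖toLp 2 (y - f)‖ ≤ √(Fintype.card n) * a)
    (hy' : ‖toLp 2 (y' - f')‖ ≤ √(Fintype.card n) * a) (hf : ∀ j, |f j - f' j| ≤ d) :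
    ‖toLp 2 (y - y')‖ ≤ √(Fintype.card n) * (2 * a + d) := by
  have hgap : ‖toLp 2 (f - f')‖ ≤ √(Fintype.card n) * d := norm_toLp_le_sqrt_card_mul hd hf
  have hsplit : toLp 2 (y - y') = toLp 2 (y - f) + toLp 2 (f - f') - toLp 2 (y' - f') := by
    simp only [← toLp_add, ← toLp_sub]
    congr 1
    abel
  calc ‖toLp 2 (y - y')‖ ≤ ‖toLp 2 (y - f)‖ + ‖toLp 2 (f - f')‖ + ‖toLp 2 (y' - f')‖ := by
        rw [hsplit]
        exact (norm_sub_le _ _).trans (by gcongr; exact norm_add_le _ _)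
    _ ≤ √(Fintype.card n) * (2 * a + d) := by linarith

theorem stmt_5_general (σ : ℝ) (hσ : 0 < σ) (M : ℕ)
    (ν : ℝ) (hν : ν ∈ Set.Icc (0 : ℝ) 1)
    (ω : Fin M → ℝ) (hω : ∀ i, 0 ≤ ω i)
    (Nn : Fin M → ℕ)
    (K : ∀ i, Matrix (Fin (Nn i)) (Fin (Nn i)) ℝ) (hK : ∀ i, (K i).PosSemidef)
    (k : ∀ i, Fin (Nn i) → ℝ) (hk : ∀ i j, |k i j| ≤ 1)
    (ybar ytil fbar ftil : ∀ i, Fin (Nn i) → ℝ)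
    (a d : Fin M → ℝ) (hd : ∀ i, 0 ≤ d i)
    (hybar : ∀ i, Real.sqrt (∑ j, (ybar i j - fbar i j) ^ 2) ≤ Real.sqrt (Nn i) * a i)
    (hytil : ∀ i, Real.sqrt (∑ j, (ytil i j - ftil i j) ^ 2) ≤ Real.sqrt (Nn i) * a i)
    (hgap : ∀ i j, |fbar i j - ftil i j| ≤ d i) :
    ν * |(∑ i, ω i *
        (k i ⬝ᵥ ((K i + σ ^ 2 • (1 : Matrix (Fin (Nn i)) (Fin (Nn i)) ℝ))⁻¹ *ᵥ
          (ybar i - ytil i))))| ≤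
      ν * ∑ i, ω i * ((Nn i : ℝ) / σ ^ 2) * (2 * a i + d i) := by
  have htask (i : Fin M) :
      |k i ⬝ᵥ ((K i + σ ^ 2 • (1 : Matrix (Fin (Nn i)) (Fin (Nn i)) ℝ))⁻¹ *ᵥ (ybar i - ytil i))|
        ≤ (Nn i : ℝ) / σ ^ 2 * (2 * a i + d i) := by
    have hnoise (y f : Fin (Nn i) → ℝ) (h : √(∑ j, (y j - f j) ^ 2) ≤ √(Nn i) * a i) :
        ‖toLp 2 (y - f)‖ ≤ √(Fintype.card (Fin (Nn i))) * a i := by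
      rwa [Fintype.card_fin, ← sqrt_sum_sq_eq_norm_toLp]
    have hdiff := norm_toLp_sub_le_of_approx (hd i) (hnoise _ _ (hybar i)) (hnoise _ _ (hytil i))
      (hgap i)
    simpa only [Fintype.card_fin] using
      (hK i).abs_dotProduct_inv_add_smul_one_mulVec_le (pow_pos hσ 2) (hk i) hdiff
  gcongr ν * ?_
  · exact hν.1
  refine (Finset.abs_sum_le_sum_abs _ _).trans (Finset.sum_le_sum fun i _ => ?_)
  rw [abs_mul, abs_of_nonneg (hω i), mul_assoc]
  exact mul_le_mul_of_nonneg_left (htask i) (hω i)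

/-- The deterministic core of Lemma 3 (ucb_diff): a bound on the weighted
combination of quadratic forms `k_iᵀ (K_i + σ²I)⁻¹ (ȳ_i − ỹ_i)`. -/
theorem stmt_5 (σ : ℝ) (hσ : 0 < σ) (M : ℕ) (hM : 1 ≤ M)
    (ν : ℝ) (hν : ν ∈ Set.Icc (0 : ℝ) 1)
    (ω : Fin M → ℝ) (hω : ∀ i, 0 ≤ ω i) (hωsum : ∑ i, ω i = 1)
    (Nn : Fin M → ℕ) (hNn : ∀ i, 1 ≤ Nn i)
    (K : ∀ i, Matrix (Fin (Nn i)) (Fin (Nn i)) ℝ) (hK : ∀ i, (K i).PosSemidef)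
    (k : ∀ i, Fin (Nn i) → ℝ) (hk : ∀ i j, |k i j| ≤ 1)
    (ybar ytil fbar ftil : ∀ i, Fin (Nn i) → ℝ)
    (a d : Fin M → ℝ) (ha : ∀ i, 0 ≤ a i) (hd : ∀ i, 0 ≤ d i)
    (hybar : ∀ i, Real.sqrt (∑ j, (ybar i j - fbar i j) ^ 2) ≤ Real.sqrt (Nn i) * a i)
    (hytil : ∀ i, Real.sqrt (∑ j, (ytil i j - ftil i j) ^ 2) ≤ Real.sqrt (Nn i) * a i)
    (hgap : ∀ i j, |fbar i j - ftil i j| ≤ d i) :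
    ν * |(∑ i, ω i *
        (k i ⬝ᵥ ((K i + σ ^ 2 • (1 : Matrix (Fin (Nn i)) (Fin (Nn i)) ℝ))⁻¹ *ᵥ
          (ybar i - ytil i))))| ≤
      ν * ∑ i, ω i * ((Nn i : ℝ) / σ ^ 2) * (2 * a i + d i) :=
  stmt_5_general σ hσ M ν hν ω hω Nn K hK k hk ybar ytil fbar ftil a d hd hybar hytil hgap
end

section
/- Let σ > 0, T ≥ 1, and σ₁, …, σ_T ∈ (0, 1]. Define C₁' = 2 / log(1 + σ⁻²) and Γ_T = (1/2)·Σ_{t=1}^T log(1 + σ⁻²·σ_t²). Then Σ_{t=1}^T σ_t ≤ √(C₁' · T · Γ_T). -/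
/-!
By concavity of `log` on `[1, 1 + c]`, `x * log (1 + c) ≤ log (1 + c x)` for `x ∈ [0, 1]`;
applied to `x = σ_t²` this bounds each `σ_t²` by `log (1 + c σ_t²) / log (1 + c)`, and
Cauchy–Schwarz `(Σ σ_t)² ≤ T Σ σ_t²` finishes the proof.
-/

open Finset Real

lemma mul_log_one_add_le_log_one_add_mul {c x : ℝ} (hc : -1 < c) (hx₀ : 0 ≤ x)
    (hx₁ : x ≤ 1) :
    x * log (1 + c) ≤ log (1 + c * x) := by
  have h := strictConcaveOn_log_Ioi.concaveOn.2 (Set.mem_Ioi.2 one_pos)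
    (Set.mem_Ioi.2 (by linarith : (0 : ℝ) < 1 + c)) (sub_nonneg.2 hx₁) hx₀
    (sub_add_cancel 1 x)
  simp only [smul_eq_mul, log_one, mul_zero, zero_add] at h
  rwa [show (1 - x) * 1 + x * (1 + c) = 1 + c * x by ring] at h

lemma sq_le_log_one_add_mul_sq_div {c x : ℝ} (hc : 0 < c) (hx : |x| ≤ 1) :
    x ^ 2 ≤ log (1 + c * x ^ 2) / log (1 + c) := by
  rw [le_div_iff₀ (log_pos (by linarith))]
  exact mul_log_one_add_le_log_one_add_mul (by linarith) (sq_nonneg x)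
    ((sq_le_one_iff_abs_le_one x).2 hx)

lemma sq_sum_le_card_mul_sum_log_div {ι : Type*} (s : Finset ι) (f : ι → ℝ) {c : ℝ}
    (hc : 0 < c) (hf : ∀ i ∈ s, |f i| ≤ 1) :
    (∑ i ∈ s, f i) ^ 2 ≤ #s * (∑ i ∈ s, log (1 + c * f i ^ 2)) / log (1 + c) := by
  calc (∑ i ∈ s, f i) ^ 2 ≤ #s * ∑ i ∈ s, f i ^ 2 := sq_sum_le_card_mul_sum_sq
    _ ≤ #s * ∑ i ∈ s, log (1 + c * f i ^ 2) / log (1 + c) := by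
      gcongr with i hi
      exact sq_le_log_one_add_mul_sq_div hc (hf i hi)
    _ = #s * (∑ i ∈ s, log (1 + c * f i ^ 2)) / log (1 + c) := by
      rw [← sum_div, mul_div_assoc]

theorem stmt_9_general (σ : ℝ) (hσ : 0 < σ) (T : ℕ)
    (sig : ℕ → ℝ) (hsig : ∀ t ∈ Finset.Icc 1 T, sig t ∈ Set.Ioc (0 : ℝ) 1) :
    ∑ t ∈ Finset.Icc 1 T, sig t ≤
      Real.sqrt ((2 / Real.log (1 + 1 / σ ^ 2)) * T *
        ((1 / 2) * ∑ t ∈ Finset.Icc 1 T, Real.log (1 + (1 / σ ^ 2) * sig t ^ 2))) := by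
  have hbound : ∀ t ∈ Icc 1 T, |sig t| ≤ 1 := fun t ht ↦
    abs_le.2 ⟨by linarith [(hsig t ht).1], (hsig t ht).2⟩
  have hsq := sq_sum_le_card_mul_sum_log_div (Icc 1 T) sig (by positivity : 0 < 1 / σ ^ 2) hbound
  rw [Nat.card_Icc, Nat.add_sub_cancel] at hsq
  refine (le_abs_self _).trans (abs_le_sqrt (hsq.trans_eq ?_))
  ring

/-- `Σ_{t=1}^T σ_t ≤ √(C₁' T Γ_T)` with `C₁' = 2/log(1+σ⁻²)` and
`Γ_T = (1/2) Σ_t log (1 + σ⁻² σ_t²)`. -/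
theorem stmt_9 (σ : ℝ) (hσ : 0 < σ) (T : ℕ) (hT : 1 ≤ T)
    (sig : ℕ → ℝ) (hsig : ∀ t ∈ Finset.Icc 1 T, sig t ∈ Set.Ioc (0 : ℝ) 1) :
    ∑ t ∈ Finset.Icc 1 T, sig t ≤
      Real.sqrt ((2 / Real.log (1 + 1 / σ ^ 2)) * T *
        ((1 / 2) * ∑ t ∈ Finset.Icc 1 T, Real.log (1 + (1 / σ ^ 2) * sig t ^ 2))) :=
  stmt_9_general σ hσ T sig hsig
end

section
/- Let δ ∈ (0,1), σ > 0, n ≥ 1. Let a₁, …, a_n and b₁, …, b_n be real numbers, let ε₁, …, ε_n be independent random variables each distributed as the Gaussian N(0, σ²), and set y_j = b_j + ε_j. Let T be an arbitrary index set and for each t ∈ T let L_{t,1}, …, L_{t,n} and U_{t,1}, …, U_{t,n} be real numbers with L_{t,j} ≤ a_j ≤ U_{t,j} for all j. Then with probability at least 1 − δ/4, simultaneously for all t ∈ T and all j = 1, …, n: |b_j − a_j| ≤ √(2σ² log(8n/δ)) + max(|y_j − U_{t,j}|, |y_j − L_{t,j}|). -/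
open MeasureTheory ProbabilityTheory

/-!
Since `L ≤ a ≤ U`, the distance from `y_j` to `a_j` is at most `max |y_j - U| |y_j - L|`, so the
triangle inequality through `y_j = b_j + ε_j` bounds `|b_j - a_j|` by `|ε_j|` plus that maximum,
for every `t` at once. It therefore suffices that `|ε_j| < √(2σ² log (8n/δ))` for all `j`: the
Chernoff bound for the `σ²`-sub-Gaussian `ε_j` puts probability at most `δ/(4n)` on each failure,
and a union bound over the `n` indices finishes.
-/

namespace ProbabilityTheory

lemma hasSubgaussianMGF_of_map_eq_gaussianReal {Ω : Type*} [MeasurableSpace Ω] {P : Measure Ω}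
    {X : Ω → ℝ} {v : NNReal} (h : P.map X = gaussianReal 0 v) : HasSubgaussianMGF X v P := by
  have hX : AEMeasurable X P := aemeasurable_of_map_neZero (by rw [h]; infer_instance)
  rw [← HasSubgaussianMGF.id_map_iff hX, h]
  exact ⟨integrable_exp_mul_gaussianReal, fun t ↦ by simp [mgf_id_gaussianReal]⟩

lemma HasSubgaussianMGF.measureReal_abs_ge_le {Ω : Type*} [MeasurableSpace Ω] {μ : Measure Ω}
    [IsFiniteMeasure μ] {X : Ω → ℝ} {c : NNReal} (h : HasSubgaussianMGF X c μ) {r : ℝ}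
    (hr : 0 ≤ r) : μ.real {ω | r ≤ |X ω|} ≤ 2 * Real.exp (-r ^ 2 / (2 * c)) := by
  have hsplit : {ω | r ≤ |X ω|} = {ω | r ≤ X ω} ∪ {ω | r ≤ (-X) ω} := by
    ext ω; simp [le_abs]
  calc μ.real {ω | r ≤ |X ω|}
      ≤ μ.real {ω | r ≤ X ω} + μ.real {ω | r ≤ (-X) ω} := hsplit ▸ measureReal_union_le _ _
    _ ≤ _ := by linarith [h.measure_ge_le hr, h.neg.measure_ge_le hr]

end ProbabilityTheory

lemma exp_neg_sq_sqrt_log_div_eq_inv {σ x : ℝ} (hσ : σ ≠ 0) (hx : 1 ≤ x) :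
    Real.exp (-Real.sqrt (2 * σ ^ 2 * Real.log x) ^ 2 / (2 * σ ^ 2)) = x⁻¹ := by
  have hlog : 0 ≤ Real.log x := Real.log_nonneg hx
  rw [Real.sq_sqrt (by positivity), neg_div, mul_div_cancel_left₀ _ (by positivity),
    Real.exp_neg, Real.exp_log (by linarith)]

lemma abs_sub_le_abs_add_max_of_mem_Icc {a b e l u : ℝ} (ha : a ∈ Set.Icc l u) :
    |b - a| ≤ |e| + max |b + e - u| |b + e - l| := by
  have hmax : |b + e - a| ≤ max |b + e - u| |b + e - l| :=
    abs_le_max_abs_abs (by linarith [ha.2]) (by linarith [ha.1])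
  calc |b - a| = |-e + (b + e - a)| := by ring_nf
    _ ≤ |e| + |b + e - a| := by simpa using abs_add_le (-e) (b + e - a)
    _ ≤ _ := by gcongr

theorem stmt_13_general {Ω : Type*} [MeasurableSpace Ω] (P : Measure Ω) [IsProbabilityMeasure P]
    (δ σ : ℝ) (hδ : δ ∈ Set.Ioo (0 : ℝ) 1) (hσ : 0 < σ)
    (n : ℕ) (hn : 1 ≤ n) (a b : Fin n → ℝ)
    (ε : Fin n → Ω → ℝ) (hεm : ∀ j, Measurable (ε j))
    (hdist : ∀ j, P.map (ε j) = gaussianReal 0 ⟨σ ^ 2, sq_nonneg σ⟩)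
    {ι : Type*} (L U : ι → Fin n → ℝ)
    (hLU : ∀ t j, L t j ≤ a j ∧ a j ≤ U t j) :
    ENNReal.ofReal (1 - δ / 4) ≤
      P {ω | ∀ (t : ι) (j : Fin n),
        |b j - a j| ≤ Real.sqrt (2 * σ ^ 2 * Real.log (8 * n / δ)) +
          max |(b j + ε j ω) - U t j| |(b j + ε j ω) - L t j|} := by
  set c := Real.sqrt (2 * σ ^ 2 * Real.log (8 * n / δ))
  have hn0 : (0 : ℝ) < n := by exact_mod_cast hn
  have htail : ∀ j, P.real {ω | c ≤ |ε j ω|} ≤ δ / (4 * n) := fun j ↦ by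
    have hratio : 1 ≤ 8 * n / δ := by
      rw [le_div_iff₀ hδ.1]; linarith [hδ.2, (by exact_mod_cast hn : (1 : ℝ) ≤ n)]
    refine ((hasSubgaussianMGF_of_map_eq_gaussianReal (hdist j)).measureReal_abs_ge_le
      (Real.sqrt_nonneg _)).trans_eq ?_
    change 2 * Real.exp (-c ^ 2 / (2 * σ ^ 2)) = _
    rw [exp_neg_sq_sqrt_log_div_eq_inv hσ.ne' hratio]
    field_simp; ring
  set bad := ⋃ j, {ω | c ≤ |ε j ω|}
  have hbad : P.real bad ≤ δ / 4 := calc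
    _ ≤ ∑ j, P.real {ω | c ≤ |ε j ω|} := measureReal_iUnion_fintype_le _
    _ ≤ ∑ _ : Fin n, δ / (4 * n) := Finset.sum_le_sum fun j _ ↦ htail j
    _ = δ / 4 := by
      simp only [Finset.sum_const, Finset.card_univ, Fintype.card_fin, nsmul_eq_mul]
      field_simp
  have hmeas : MeasurableSet bad :=
    .iUnion fun j ↦ measurableSet_le measurable_const (hεm j).abs
  calc ENNReal.ofReal (1 - δ / 4)
      ≤ ENNReal.ofReal (P.real badᶜ) := by
        rw [probReal_compl_eq_one_sub hmeas]; gcongr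
    _ = P badᶜ := ofReal_measureReal
    _ ≤ _ := by
        refine measure_mono fun ω hω t j ↦ ?_
        simp only [bad, Set.compl_iUnion, Set.mem_iInter, Set.mem_compl_iff, Set.mem_ofPred_eq,
          not_le] at hω
        exact (abs_sub_le_abs_add_max_of_mem_Icc (hLU t j)).trans (by gcongr; exact (hω j).le)

/-- The probabilistic content of Lemma 1 (estimate_di): with `y_j = b_j + ε_j`
for independent `ε_j ~ N(0,σ²)`, with probability at least `1 − δ/4`, simultaneously for all
`t` in an arbitrary index set and all `j`,
`|b_j − a_j| ≤ √(2σ² log (8n/δ)) + max (|y_j − U_{t,j}|) (|y_j − L_{t,j}|)`. -/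
theorem stmt_13 {Ω : Type*} [MeasurableSpace Ω] (P : Measure Ω) [IsProbabilityMeasure P]
    (δ σ : ℝ) (hδ : δ ∈ Set.Ioo (0 : ℝ) 1) (hσ : 0 < σ)
    (n : ℕ) (hn : 1 ≤ n) (a b : Fin n → ℝ)
    (ε : Fin n → Ω → ℝ) (hεm : ∀ j, Measurable (ε j))
    (hindep : iIndepFun ε P)
    (hdist : ∀ j, P.map (ε j) = gaussianReal 0 ⟨σ ^ 2, sq_nonneg σ⟩)
    {ι : Type*} (L U : ι → Fin n → ℝ)
    (hLU : ∀ t j, L t j ≤ a j ∧ a j ≤ U t j) :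
    ENNReal.ofReal (1 - δ / 4) ≤
      P {ω | ∀ (t : ι) (j : Fin n),
        |b j - a j| ≤ Real.sqrt (2 * σ ^ 2 * Real.log (8 * n / δ)) +
          max |(b j + ε j ω) - U t j| |(b j + ε j ω) - L t j|} :=
  stmt_13_general P δ σ hδ hσ n hn a b ε hεm hdist L U hLU
end

section
/- Let D be a nonempty set, M ≥ 1, and let f, μ, σ_f : D → ℝ and, for i = 1, …, M, μ̃_i, σ̃_i : D → ℝ be functions with σ_f, σ̃_i nonnegative. Let ω₁, …, ω_M be probability simplex weights (ω_i ≥ 0, Σ_i ω_i = 1), ν ∈ [0,1], τ ≥ 0, β ≥ 0, α ≥ 0. Define ζ̃(x) = ν·Σ_i ω_i·(μ̃_i(x) + τ·σ̃_i(x)) + (1 − ν)·(μ(x) + β·σ_f(x)). Assume that for all x ∈ D: |f(x) − μ̃_i(x)| ≤ τ·σ̃_i(x) for every i, and |f(x) − μ(x)| ≤ β·σ_f(x). Let ζ̄ : D → ℝ satisfy |ζ̄(x) − ζ̃(x)| ≤ ν·α for all x ∈ D, and let x_t ∈ D satisfy ζ̄(x_t) ≥ ζ̄(x) for all x ∈ D.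 Then for every x* ∈ D, f(x*) ≤ ζ̄(x_t) + ν·α. -/
/-- The deterministic core of Lemma 5 (bound_opt_func_val): the value of `f`
at any point is upper-bounded by `ζ̄(x_t) + ν·α` where `x_t` maximizes the acquisition
function `ζ̄`. -/
theorem stmt_14 {D : Type*} [Nonempty D] (M : ℕ) (hM : 1 ≤ M)
    (f μ σf : D → ℝ) (μt σt : Fin M → D → ℝ)
    (hσf : ∀ x, 0 ≤ σf x) (hσt : ∀ i x, 0 ≤ σt i x)
    (ω : Fin M → ℝ) (hω : ∀ i, 0 ≤ ω i) (hωsum : ∑ i, ω i = 1)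
    (ν τ β α : ℝ) (hν : ν ∈ Set.Icc (0 : ℝ) 1) (hτ : 0 ≤ τ) (hβ : 0 ≤ β) (hα : 0 ≤ α)
    (hconf1 : ∀ x i, |f x - μt i x| ≤ τ * σt i x)
    (hconf2 : ∀ x, |f x - μ x| ≤ β * σf x)
    (ζbar : D → ℝ)
    (hζ : ∀ x, |ζbar x -
      (ν * (∑ i, ω i * (μt i x + τ * σt i x)) + (1 - ν) * (μ x + β * σf x))| ≤ ν * α)
    (xt : D) (hxt : ∀ x, ζbar x ≤ ζbar xt) (xstar : D) :
    f xstar ≤ ζbar xt + ν * α := by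
  obtain ⟨hν0, hν1⟩ := hν
  set ζt : D → ℝ := fun x =>
    ν * (∑ i, ω i * (μt i x + τ * σt i x)) + (1 - ν) * (μ x + β * σf x) with hζt
  have hf : f xstar ≤ ζt xstar := by
    have h1 : ∀ i, ω i * f xstar ≤ ω i * (μt i xstar + τ * σt i xstar) := by
      intro i
      have := abs_le.mp (hconf1 xstar i)
      exact mul_le_mul_of_nonneg_left (by linarith [this.2]) (hω i)
    have h2 : f xstar ≤ ∑ i, ω i * (μt i xstar + τ * σt i xstar) := by
      calc f xstar = ∑ i, ω i * f xstar := by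
            rw [← Finset.sum_mul, hωsum, one_mul]
        _ ≤ _ := Finset.sum_le_sum fun i _ => h1 i
    have h3 : f xstar ≤ μ xstar + β * σf xstar := by
      have := abs_le.mp (hconf2 xstar); linarith [this.2]
    calc f xstar = ν * f xstar + (1 - ν) * f xstar := by ring
      _ ≤ ζt xstar := by
          exact add_le_add (mul_le_mul_of_nonneg_left h2 hν0)
            (mul_le_mul_of_nonneg_left h3 (by linarith))
  simp only [hζt] at hf
  have h4 := abs_le.mp (hζ xstar)
  have h5 := hxt xstar
  linarith [h4.1]
end

section
/- Let D be a nonempty set, M ≥ 1, and let f, μ, σ_f : D → ℝ and, for i = 1, …, M, μ̃_i, σ̃_i : D → ℝ be functions with σ_f nonnegative and 0 ≤ σ̃_i(x) ≤ 1 for all x ∈ D. Let ω₁, …, ω_M be probability simplex weights (ω_i ≥ 0, Σ_i ω_i = 1), ν ∈ [0,1], τ ≥ 0, β ≥ 0, α ≥ 0. Define ζ̃(x) = ν·Σ_i ω_i·(μ̃_i(x) + τ·σ̃_i(x)) + (1 − ν)·(μ(x) + β·σ_f(x)). Assume that for all x ∈ D: |f(x) − μ̃_i(x)| ≤ τ·σ̃_i(x)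 for every i, and |f(x) − μ(x)| ≤ β·σ_f(x). Let ζ̄ : D → ℝ satisfy |ζ̄(x) − ζ̃(x)| ≤ ν·α for all x ∈ D, and let x_t ∈ D satisfy ζ̄(x_t) ≥ ζ̄(x) for all x ∈ D. Then for every x* ∈ D, f(x*) − f(x_t) ≤ 2ν·(α + τ) + 2(1 − ν)·β·σ_f(x_t). -/
/-- The deterministic core of the instantaneous-regret lemma:
`f(x*) − f(x_t) ≤ 2ν(α+τ) + 2(1−ν)β σ_f(x_t)`. -/
theorem stmt_15 {D : Type*} [Nonempty D] (M : ℕ) (hM : 1 ≤ M)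
    (f μ σf : D → ℝ) (μt σt : Fin M → D → ℝ)
    (hσf : ∀ x, 0 ≤ σf x) (hσt : ∀ i x, σt i x ∈ Set.Icc (0 : ℝ) 1)
    (ω : Fin M → ℝ) (hω : ∀ i, 0 ≤ ω i) (hωsum : ∑ i, ω i = 1)
    (ν τ β α : ℝ) (hν : ν ∈ Set.Icc (0 : ℝ) 1) (hτ : 0 ≤ τ) (hβ : 0 ≤ β) (hα : 0 ≤ α)
    (hconf1 : ∀ x i, |f x - μt i x| ≤ τ * σt i x)
    (hconf2 : ∀ x, |f x - μ x| ≤ β * σf x)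
    (ζbar : D → ℝ)
    (hζ : ∀ x, |ζbar x -
      (ν * (∑ i, ω i * (μt i x + τ * σt i x)) + (1 - ν) * (μ x + β * σf x))| ≤ ν * α)
    (xt : D) (hxt : ∀ x, ζbar x ≤ ζbar xt) (xstar : D) :
    f xstar - f xt ≤ 2 * ν * (α + τ) + 2 * (1 - ν) * β * σf xt := by
  obtain ⟨hν0, hν1⟩ := hν
  -- lower bound at xstar
  have hsum1 : ν * f xstar ≤ ν * ∑ i, ω i * (μt i xstar + τ * σt i xstar) := by
    have h : ∑ i, ω i * f xstar ≤ ∑ i, ω i * (μt i xstar + τ * σt i xstar) := by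
      refine Finset.sum_le_sum fun i _ => mul_le_mul_of_nonneg_left ?_ (hω i)
      have := abs_le.1 (hconf1 xstar i)
      linarith [this.1, this.2]
    have h0 : ∑ i, ω i * f xstar = f xstar := by
      rw [← Finset.sum_mul, hωsum, one_mul]
    calc ν * f xstar = ν * ∑ i, ω i * f xstar := by rw [h0]
      _ ≤ _ := mul_le_mul_of_nonneg_left h hν0
  -- upper bound at xt
  have hsum2 : ν * ∑ i, ω i * (μt i xt + τ * σt i xt) ≤ ν * (f xt + 2 * τ) := by
    have h : ∑ i, ω i * (μt i xt + τ * σt i xt) ≤ ∑ i, ω i * (f xt + 2 * τ) := by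
      refine Finset.sum_le_sum fun i _ => mul_le_mul_of_nonneg_left ?_ (hω i)
      have h1 := abs_le.1 (hconf1 xt i)
      have h2 := (hσt i xt).2
      nlinarith [h1.1, h1.2]
    have h0 : ∑ i, ω i * (f xt + 2 * τ) = f xt + 2 * τ := by
      rw [← Finset.sum_mul, hωsum, one_mul]
    rw [h0] at h
    exact mul_le_mul_of_nonneg_left h hν0
  have hc2s := abs_le.1 (hconf2 xstar)
  have hc2t := abs_le.1 (hconf2 xt)
  have hzs := abs_le.1 (hζ xstar)
  have hzt := abs_le.1 (hζ xt)
  have hx := hxt xstar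
  nlinarith [mul_le_mul_of_nonneg_left hc2s.2 (sub_nonneg.2 hν1),
    mul_le_mul_of_nonneg_left hc2t.1 (sub_nonneg.2 hν1)]
end
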